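/- Let H be a group, α an automorphism of H, and V a subgroup with α(V) ≤ V, [V : α(V)] = q for a finite q ≥ 2, and H = ⋃_{n≥0} α^{−n}(V). Then the coset graph T^(α) is a tree in which every vertex has exactly q+1 neighbours; moreover, for each h ∈ H the left translation gαⁿ(V) ↦ hgαⁿ(V) and the map ᾱ : gαⁿ(V) ↦ α(g)α^{n+1}(V) are well-defined graph automorphisms of T^(α), and the group of graph automorphisms generated by ᾱ together with all left translations acts transitively on the vertex set of T^(α). -/

import Mathlib

namespace Scale

/-- A vertex of the `(q+1)`-regular tree `T_{q+1}`: a level `n ∈ ℤ` together with a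
labelling `ℤ → Fin q` which vanishes above the level and for all sufficiently small indices. -/
@[ext] structure Vertex (q : ℕ) where
  level : ℤ
  lab : ℤ → Fin q
  zero_gt : ∀ i : ℤ, level < i → (lab i : ℕ) = 0
  bdd : ∃ N : ℤ, ∀ i : ℤ, i < N → (lab i : ℕ) = 0

namespace Vertex

variable {q : ℕ} [NeZero q]

/-- The parent `v⁺` of a vertex. -/
def parent (v : Vertex q) : Vertex q where
  level := v.level - 1
  lab := fun i => if v.level - 1 < i then 0 else v.lab i
  zero_gt := by intro i hi; simp [hi]
  bdd := by
    obtain ⟨N, hN⟩ := v.bdd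
    refine ⟨N, fun i hi => ?_⟩
    by_cases h : v.level - 1 < i
    · simp [h]
    · simp [h, hN i hi]

/-- The child `vj` of a vertex `v`. -/
def child (v : Vertex q) (j : Fin q) : Vertex q where
  level := v.level + 1
  lab := fun i => if i = v.level + 1 then j else v.lab i
  zero_gt := by
    intro i hi
    have h1 : i ≠ v.level + 1 := by omega
    simp [h1, v.zero_gt i (by omega)]
  bdd := by
    obtain ⟨N, hN⟩ := v.bdd
    refine ⟨min N (v.level + 1), fun i hi => ?_⟩
    have h1 : i < N := lt_of_lt_of_le hi (min_le_left _ _)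
    have h2 : i < v.level + 1 := lt_of_lt_of_le hi (min_le_right _ _)
    have h3 : i ≠ v.level + 1 := by omega
    simp [h3, hN i h1]

/-- The restriction `w|_m` of a vertex to level `m`. -/
def trunc (v : Vertex q) (m : ℤ) : Vertex q where
  level := m
  lab := fun i => if m < i then 0 else v.lab i
  zero_gt := by intro i hi; simp [hi]
  bdd := by
    obtain ⟨N, hN⟩ := v.bdd
    refine ⟨N, fun i hi => ?_⟩
    by_cases h : m < i
    · simp [h]
    · simp [h, hN i hi]

/-- `w` is a descendant of `u` (in the rooted subtree `T_u`). -/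
def Descendant (u w : Vertex q) : Prop := u.level ≤ w.level ∧ trunc w u.level = u

end Vertex

/-- The all-zero vertex `ṽ_n` at level `n`. -/
def zeroVtx (q : ℕ) [NeZero q] (n : ℤ) : Vertex q where
  level := n
  lab := fun _ => 0
  zero_gt := by intro i _; simp
  bdd := ⟨0, by intro i _; simp⟩

/-- The map shifting all labels by `k` (a translation towards the end `ω` when `k > 0`). -/
def shiftMap {q : ℕ} (k : ℤ) (v : Vertex q) : Vertex q where
  level := v.level + k
  lab := fun i => v.lab (i - k)
  zero_gt := fun i hi => v.zero_gt (i - k) (by omega)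
  bdd := by
    obtain ⟨N, hN⟩ := v.bdd
    exact ⟨N + k, fun i hi => hN (i - k) (by omega)⟩

/-- The translation `x̃₀ᵏ` of `T_{q+1}` as a permutation of the vertices. -/
def shiftPerm (q : ℕ) (k : ℤ) : Equiv.Perm (Vertex q) where
  toFun := shiftMap k
  invFun := shiftMap (-k)
  left_inv := by
    intro v
    refine Vertex.ext ?_ ?_
    · show v.level + k + -k = v.level
      omega
    · funext i
      show v.lab (i - -k - k) = v.lab i
      congr 1
      omega
  right_inv := by
    intro v
    refine Vertex.ext ?_ ?_
    · show v.level + -k + k = v.level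
      omega
    · funext i
      show v.lab (i - k - -k) = v.lab i
      congr 1
      omega

/-- The group `Isom(T_{q+1})_ω` of tree automorphisms fixing the distinguished end `ω`,
realised as the subgroup of permutations of the vertex set commuting with `parent`. -/
def IsomOmega (q : ℕ) [NeZero q] : Subgroup (Equiv.Perm (Vertex q)) where
  carrier := {x | ∀ v : Vertex q, x (Vertex.parent v) = Vertex.parent (x v)}
  one_mem' := fun _ => rfl
  mul_mem' := by
    intro a b ha hb v
    show (a * b) (Vertex.parent v) = Vertex.parent ((a * b) v)
    rw [Equiv.Perm.mul_apply, Equiv.Perm.mul_apply, hb, ha]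
  inv_mem' := by
    intro a ha v
    show a⁻¹ (Vertex.parent v) = Vertex.parent (a⁻¹ v)
    have h := ha (a⁻¹ v)
    rw [Equiv.Perm.coe_inv, Equiv.apply_symm_apply] at h
    rw [← h, Equiv.Perm.coe_inv, Equiv.symm_apply_apply]

/-- The level shift `n(x)` of an automorphism (evaluated at the zero vertex; for members
of `IsomOmega q` the shift is the same at every vertex). -/
def lshift {q : ℕ} [NeZero q] (x : Equiv.Perm (Vertex q)) : ℤ := (x (zeroVtx q 0)).level

/-- An automorphism is elliptic if it fixes a vertex. -/
def Elliptic {q : ℕ} (x : Equiv.Perm (Vertex q)) : Prop := ∃ v : Vertex q, x v = v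

/-- Topology of pointwise convergence on `X → X` for `X` discrete. -/
def funTop (X : Type*) : TopologicalSpace (X → X) :=
  @Pi.topologicalSpace X (fun _ => X) (fun _ => ⊥)

/-- The permutation topology on `Equiv.Perm X`: pointwise stabilisers of finite sets of
points form a neighbourhood basis of the identity. -/
def permTop (X : Type*) : TopologicalSpace (Equiv.Perm X) :=
  @TopologicalSpace.induced (Equiv.Perm X) ((X → X) × (X → X))
    (fun g => ((g : X → X), ((g⁻¹ : Equiv.Perm X) : X → X)))
    (@instTopologicalSpaceProd _ _ (funTop X) (funTop X))

instance (q : ℕ) : TopologicalSpace (Equiv.Perm (Vertex q)) := permTop _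

instance (q : ℕ) : TopologicalSpace (Equiv.Perm (List (Fin q))) := permTop _

/-- A scale group: a closed subgroup of `Isom(T_{q+1})_ω` acting transitively on vertices. -/
def IsScaleGroup {q : ℕ} [NeZero q] (P : Subgroup (Equiv.Perm (Vertex q))) : Prop :=
  P ≤ IsomOmega q ∧ IsClosed (P : Set (Equiv.Perm (Vertex q))) ∧
    ∀ v w : Vertex q, ∃ x ∈ P, x v = w

/-- The stabiliser of the vertex `v` in `P`, as a subgroup of the ambient permutation group. -/
def stabIn {q : ℕ} (P : Subgroup (Equiv.Perm (Vertex q))) (v : Vertex q) :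
    Subgroup (Equiv.Perm (Vertex q)) where
  carrier := {g | g ∈ P ∧ g v = v}
  one_mem' := ⟨P.one_mem, rfl⟩
  mul_mem' := by
    intro a b ha hb
    exact ⟨P.mul_mem ha.1 hb.1, by rw [Equiv.Perm.mul_apply, hb.2, ha.2]⟩
  inv_mem' := by
    intro a ha
    refine ⟨P.inv_mem ha.1, ?_⟩
    rw [Equiv.Perm.inv_eq_iff_eq]
    exact ha.2.symm

/-- The conjugate subgroup `xVx⁻¹`. -/
def conjSub {G : Type*} [Group G] (x : G) (V : Subgroup G) : Subgroup G :=
  V.map (MulAut.conj x).toMonoidHom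

/-- The vertex `ξ|_m` on the ray towards the end represented by `ξ`. -/
def ray (q : ℕ) [NeZero q] (ξ : ℤ → Fin q) (N : ℤ) (hξ : ∀ i : ℤ, i < N → (ξ i : ℕ) = 0)
    (m : ℤ) : Vertex q where
  level := m
  lab := fun i => if m < i then 0 else ξ i
  zero_gt := by intro i hi; simp [hi]
  bdd := by
    refine ⟨N, fun i hi => ?_⟩
    by_cases h : m < i
    · simp [h]
    · simp [h, hξ i hi]

/-- The contraction group of `x` in `P`. -/
def conSet {q : ℕ} (P : Subgroup (Equiv.Perm (Vertex q))) (x : Equiv.Perm (Vertex q)) :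
    Set (Equiv.Perm (Vertex q)) :=
  {g | g ∈ P ∧ ∀ v : Vertex q, ∃ N : ℕ, ∀ n : ℕ, N ≤ n → (x ^ n * g * (x ^ n)⁻¹) v = v}


/-- `c` is a `P`-labelling of `T_{q+1}` with distinguished bi-infinite path `vp`:
each `c v` is a bijection from the directed edges out of `v` (encoded as the
neighbours of `v`) to `{0, …, q}`; the edge towards the parent is labelled `q`;
along the path `vp` the downward edges are labelled `0`; and `P` contains, for
all `u₁, u₂`, an element carrying `u₁` to `u₂` and preserving the labels on the
rooted subtree of descendants of `u₁`. -/
def IsPLabelling {q : ℕ} [NeZero q] (P : Subgroup (Equiv.Perm (Vertex q)))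
    (c : Vertex q → Vertex q → Fin (q + 1)) (vp : ℤ → Vertex q) : Prop :=
  (∀ v : Vertex q, ∀ j : Fin (q + 1),
      ∃! w : Vertex q, (Vertex.parent w = v ∨ w = Vertex.parent v) ∧ c v w = j) ∧
  (∀ v : Vertex q, (c v (Vertex.parent v) : ℕ) = q) ∧
  (∀ n : ℤ, Vertex.parent (vp (n + 1)) = vp n) ∧
  (∀ n : ℤ, (c (vp n) (vp (n + 1)) : ℕ) = 0) ∧
  (∀ u₁ u₂ : Vertex q, ∃ x, x ∈ P ∧ x u₁ = u₂ ∧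
    ∀ w w' : Vertex q, Vertex.Descendant u₁ w → Vertex.Descendant u₁ w' →
      (Vertex.parent w = w' ∨ Vertex.parent w' = w) → c (x w) (x w') = c w w')

open Classical in
/-- The standard labelling of `T_{q+1}`: the edge from `v` to its child `vj` is
labelled `j` and the edge towards the parent is labelled `q`. -/
noncomputable def stdLabel (q : ℕ) [NeZero q] : Vertex q → Vertex q → Fin (q + 1) :=
  fun v w =>
    if Vertex.parent w = v then Fin.castLE (Nat.le_succ q) (w.lab (v.level + 1))
    else Fin.last q

/-- Convert an edge label in `{0,…,q}` known to be `< q` into a letter in `{0,…,q-1}`. -/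
def toFinQ {q : ℕ} [NeZero q] (j : Fin (q + 1)) : Fin q :=
  if h : (j : ℕ) < q then ⟨j, h⟩ else ⟨0, Nat.pos_of_ne_zero (NeZero.ne q)⟩

/-- The string of labels read along the downward path of length `d` ending at `w`. -/
def labelString {q : ℕ} [NeZero q] (c : Vertex q → Vertex q → Fin (q + 1)) :
    Vertex q → ℕ → List (Fin q)
  | _, 0 => []
  | w, (d + 1) => labelString c (Vertex.parent w) d ++ [toFinQ (c (Vertex.parent w) w)]

/-- The isomorphism `φ^c_v : T_v → T_{q,q}` given by a labelling `c`: a descendant `w`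
of `v` is sent to the string of labels along the path from `v` down to `w`. -/
def phiStr {q : ℕ} [NeZero q] (c : Vertex q → Vertex q → Fin (q + 1)) (v w : Vertex q) :
    List (Fin q) :=
  labelString c w ((w.level - v.level).toNat)

/-- The set `P|_v = {φ^c_{x(v)} ∘ x ∘ (φ^c_v)⁻¹ : x ∈ P}` of sections of elements of `P`
at the vertex `v`, with respect to the labelling `c`. -/
def sectSet {q : ℕ} [NeZero q] (P : Subgroup (Equiv.Perm (Vertex q)))
    (c : Vertex q → Vertex q → Fin (q + 1)) (v : Vertex q) :
    Set (Equiv.Perm (List (Fin q))) :=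
  {g | ∃ x, x ∈ P ∧ ∀ w : Vertex q, Vertex.Descendant v w →
        g (phiStr c v w) = phiStr c (x v) (x w)}

/-- The standard isomorphism `φ_v : T_v → T_{q,q}`: a descendant `w` of `v` of level `m`
is sent to the string `(w_{n+1}, …, w_m)` where `n` is the level of `v`. -/
def stdStr {q : ℕ} (v w : Vertex q) : List (Fin q) :=
  (List.range (w.level - v.level).toNat).map fun k => w.lab (v.level + 1 + k)

/-- The set `{φ_{x(v)} ∘ x ∘ φ_v⁻¹ : x ∈ P}` with respect to the standard isomorphisms. -/
def stdSect {q : ℕ} [NeZero q] (P : Subgroup (Equiv.Perm (Vertex q))) (v : Vertex q) :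
    Set (Equiv.Perm (List (Fin q))) :=
  {g | ∃ x, x ∈ P ∧ ∀ w : Vertex q, Vertex.Descendant v w →
        g (stdStr v w) = stdStr (x v) (x w)}

/-- `Isom(T_{q,q})`: the group of permutations of the set of finite strings over
`{0,…,q-1}` preserving length and the prefix relation. -/
def RIsom (q : ℕ) : Subgroup (Equiv.Perm (List (Fin q))) where
  carrier := {g | (∀ l : List (Fin q), (g l).length = l.length) ∧
    ∀ l₁ l₂ : List (Fin q), l₁ <+: l₂ → g l₁ <+: g l₂}
  one_mem' := ⟨fun _ => rfl, fun _ _ h => h⟩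
  mul_mem' := by
    intro a b ha hb
    constructor
    · intro l
      rw [Equiv.Perm.mul_apply, ha.1, hb.1]
    · intro l₁ l₂ h
      rw [Equiv.Perm.mul_apply, Equiv.Perm.mul_apply]
      exact ha.2 _ _ (hb.2 _ _ h)
  inv_mem' := by
    intro a ha
    have hlen : ∀ l : List (Fin q), (a⁻¹ l).length = l.length := by
      intro l
      have h := ha.1 (a⁻¹ l)
      rw [Equiv.Perm.coe_inv, Equiv.apply_symm_apply] at h
      exact h.symm
    refine ⟨hlen, ?_⟩
    intro l₁ l₂ h
    have htake : List.take (a⁻¹ l₁).length (a⁻¹ l₂) <+: a⁻¹ l₂ := List.take_prefix _ _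
    have h2 : a (List.take (a⁻¹ l₁).length (a⁻¹ l₂)) <+: a (a⁻¹ l₂) := ha.2 _ _ htake
    rw [Equiv.Perm.coe_inv, Equiv.apply_symm_apply] at h2
    have hle : l₁.length ≤ l₂.length := h.length_le
    have hlen3 : (a (List.take (a⁻¹ l₁).length (a⁻¹ l₂))).length = l₁.length := by
      rw [ha.1, List.length_take, hlen, hlen]
      omega
    have hpre : a (List.take (a⁻¹ l₁).length (a⁻¹ l₂)) <+: l₁ :=
      List.prefix_of_prefix_length_le h2 h (le_of_eq hlen3)
    have heq : a (List.take (a⁻¹ l₁).length (a⁻¹ l₂)) = l₁ := hpre.eq_of_length hlen3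
    have heq2 : List.take (a⁻¹ l₁).length (a⁻¹ l₂) = a⁻¹ l₁ := by
      apply a.injective
      rw [heq, Equiv.Perm.coe_inv, Equiv.apply_symm_apply]
    rw [← heq2]
    exact List.take_prefix _ _

/-- A subgroup of `Isom(T_{q,q})` is self-replicating if it is self-similar, transitive
on level 1, and all the section homomorphisms `g ↦ g|_w` are surjective. -/
def SelfReplicating {q : ℕ} (G : Subgroup (Equiv.Perm (List (Fin q)))) : Prop :=
  (∀ w : List (Fin q), ∀ g, g ∈ G → g w = w →
      ∃ g', g' ∈ G ∧ ∀ v : List (Fin q), g (w ++ v) = w ++ g' v) ∧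
  (∀ j j' : Fin q, ∃ g ∈ G, g [j] = [j']) ∧
  (∀ w : List (Fin q), ∀ g', g' ∈ G →
      ∃ g, g ∈ G ∧ g w = w ∧ ∀ v : List (Fin q), g (w ++ v) = w ++ g' v)

/-- The stabiliser of the string `w` in `G ≤ Isom(T_{q,q})`, as a subgroup of `G`. -/
def rstab {q : ℕ} (G : Subgroup (Equiv.Perm (List (Fin q)))) (w : List (Fin q)) :
    Subgroup G where
  carrier := {g | (g : Equiv.Perm (List (Fin q))) w = w}
  one_mem' := rfl
  mul_mem' := by
    intro a b ha hb
    show ((a * b : G) : Equiv.Perm (List (Fin q))) w = w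
    rw [Subgroup.coe_mul, Equiv.Perm.mul_apply]
    rw [show (b : Equiv.Perm (List (Fin q))) w = w from hb,
      show (a : Equiv.Perm (List (Fin q))) w = w from ha]
  inv_mem' := by
    intro a ha
    show ((a⁻¹ : G) : Equiv.Perm (List (Fin q))) w = w
    rw [Subgroup.coe_inv, Equiv.Perm.inv_eq_iff_eq]
    exact (show (a : Equiv.Perm (List (Fin q))) w = w from ha).symm


end Scale
namespace Scale

section CosetGraph

variable {H : Type*} [Group H]

/-- The subgroup `αⁿ(V)`. -/
def aSub (α : MulAut H) (V : Subgroup H) (n : ℤ) : Subgroup H :=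
  V.map ((α ^ n).toMonoidHom)

/-- The vertex set of the coset graph `T^(α)`: the disjoint union over `n ∈ ℤ` of the
coset spaces `H/αⁿ(V)`. -/
abbrev CVert (α : MulAut H) (V : Subgroup H) : Type _ := Σ n : ℤ, H ⧸ aSub α V n

/-- The coset of `H` represented by a vertex of `T^(α)`, as a subset of `H`. -/
def cosetSet (α : MulAut H) (V : Subgroup H) (u : CVert α V) : Set H :=
  {h : H | (QuotientGroup.mk h : H ⧸ aSub α V u.1) = u.2}

/-- The coset graph `T^(α)`: a vertex `u ∈ H/α^{n+1}(V)` is adjacent to a vertex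
`u' ∈ H/αⁿ(V)` iff `u ⊆ u'` as subsets of `H`. -/
def cosetGraph (α : MulAut H) (V : Subgroup H) : SimpleGraph (CVert α V) where
  Adj u u' := (u.1 = u'.1 + 1 ∧ cosetSet α V u ⊆ cosetSet α V u') ∨
    (u'.1 = u.1 + 1 ∧ cosetSet α V u' ⊆ cosetSet α V u)
  symm := by
    constructor
    intro u u' h
    rcases h with h | h
    · exact Or.inr h
    · exact Or.inl h
  loopless := by
    constructor
    intro u h
    rcases h with ⟨h, -⟩ | ⟨h, -⟩ <;> omega

end CosetGraph

end Scale

/-!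
Every vertex `gαⁿ(V)` has exactly one neighbour one level down, its parent `gαⁿ⁻¹(V)`, and
`T^(α)` is the graph of the parent map. The graph of a map that strictly lowers a level is
acyclic (on a cycle, both cycle-neighbours of a vertex of maximal level are its parent), each
vertex has one more neighbour than it has children, and it is connected as soon as any two
vertices have a common ancestor. The children of `gαⁿ(V)` are the `[αⁿ(V) : αⁿ⁺¹(V)] = q`
cosets of `αⁿ⁺¹(V)` it contains, and `gαⁿ(V)`, `g'αᵐ(V)` have the common ancestor
`gαˡ(V) = g'αˡ(V)` once `g⁻¹g' ∈ αˡ(V)`, which `H = ⋃ α⁻ᵏ(V)` provides for `l` small enough.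
Left translations and `ᾱ` commute with the parent map, hence are automorphisms; powers of `ᾱ`
move between levels and left translations act transitively on each level.
-/

namespace SimpleGraph

variable {X β : Type*} [LinearOrder β] {G : SimpleGraph X} {p : X → X}

theorem isAcyclic_of_adj_iff_parent (f : X → β) (hf : ∀ x, f (p x) < f x)
    (hadj : ∀ x y, G.Adj x y ↔ p x = y ∨ p y = x) : G.IsAcyclic := by
  classical
  intro v c hc
  obtain ⟨u, hu, hmax⟩ := c.support.toFinset.exists_max_image f ⟨v, by simp⟩
  rw [List.mem_toFinset] at hu
  obtain ⟨w₁, w₂, hne, hnbrs⟩ :=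
    Set.ncard_eq_two.mp (hc.ncard_neighborSet_toSubgraph_eq_two hu)
  have eq_parent : ∀ w ∈ c.toSubgraph.neighborSet u, p u = w := by
    intro w hw
    have hw_supp : w ∈ c.support := c.mem_verts_toSubgraph.mp (c.toSubgraph.edge_vert hw.symm)
    refine ((hadj u w).mp hw.adj_sub).resolve_right fun hwu => ?_
    exact (hf w).not_ge (hwu ▸ hmax w (List.mem_toFinset.mpr hw_supp))
  exact hne ((eq_parent w₁ (by simp [hnbrs])).symm.trans (eq_parent w₂ (by simp [hnbrs])))

theorem reachable_iterate_of_adj (hp : ∀ x, G.Adj x (p x)) (x : X) (k : ℕ) :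
    G.Reachable x (p^[k] x) := by
  induction k with
  | zero => rfl
  | succ k ih => exact ih.trans (by rw [Function.iterate_succ_apply']; exact (hp _).reachable)

theorem connected_of_exists_iterate_eq [Nonempty X] (hp : ∀ x, G.Adj x (p x))
    (h : ∀ x y, ∃ m n : ℕ, p^[m] x = p^[n] y) : G.Connected := by
  refine (connected_iff G).mpr ⟨fun x y => ?_, inferInstance⟩
  obtain ⟨m, n, hmn⟩ := h x y
  exact (reachable_iterate_of_adj hp x m).trans (hmn ▸ (reachable_iterate_of_adj hp y n).symm)

theorem ncard_neighborSet_of_adj_iff_parent (f : X → β) (hf : ∀ x, f (p x) < f x)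
    (hadj : ∀ x y, G.Adj x y ↔ p x = y ∨ p y = x) {x : X} {q : ℕ}
    (hfiber : (p ⁻¹' {x}).ncard = q) (hq : q ≠ 0) : (G.neighborSet x).ncard = q + 1 := by
  have hnbr : G.neighborSet x = insert (p x) (p ⁻¹' {x}) := by
    ext y
    simp [mem_neighborSet, hadj, eq_comm]
  have hnot : p x ∉ p ⁻¹' {x} := fun h => ((hf (p x)).trans (hf x)).ne (congrArg f h)
  rw [hnbr, Set.ncard_insert_of_notMem hnot (Set.finite_of_ncard_ne_zero (hfiber ▸ hq)), hfiber]

def isoOfCommuteParent (hadj : ∀ x y, G.Adj x y ↔ p x = y ∨ p y = x) (e : X ≃ X)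
    (he : ∀ x, p (e x) = e (p x)) : G ≃g G where
  toEquiv := e
  map_rel_iff' {x y} := by simp only [hadj, he, e.apply_eq_iff_eq]

end SimpleGraph

theorem Subgroup.nat_card_preimage_quotientMapOfLE {G : Type*} [Group G] {s t : Subgroup G}
    (h : s ≤ t) (x : G ⧸ t) :
    Nat.card (Subgroup.quotientMapOfLE h ⁻¹' {x}) = s.relIndex t := by
  calc Nat.card (Subgroup.quotientMapOfLE h ⁻¹' {x})
      = Nat.card {y : (G ⧸ t) × (t ⧸ s.subgroupOf t) // y.1 = x} :=
        Nat.card_congr ((Subgroup.quotientEquivProdOfLE h).subtypeEquiv fun _ => Iff.rfl)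
    _ = Nat.card (t ⧸ s.subgroupOf t) := by
        rw [Nat.card_congr (Equiv.prodSubtypeFstEquivSubtypeProd (p := (· = x))), Nat.card_prod,
          Nat.card_unique, one_mul]
    _ = s.relIndex t := rfl

namespace Scale

variable {H : Type*} [Group H] {α : MulAut H} {V : Subgroup H}

theorem mem_aSub_iff {n : ℤ} {x : H} : x ∈ aSub α V n ↔ (α ^ (-n)) x ∈ V := by
  rw [aSub, Subgroup.mem_map_equiv, zpow_neg]
  rfl

theorem apply_mem_aSub_add_one_iff {n : ℤ} {x : H} :
    α x ∈ aSub α V (n + 1) ↔ x ∈ aSub α V n := by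
  rw [mem_aSub_iff, mem_aSub_iff, ← MulAut.mul_apply, ← zpow_add_one,
    show -(n + 1) + 1 = -n by ring]

theorem aSub_add_one (n : ℤ) : aSub α V (n + 1) = (aSub α V 1).map (α ^ n).toMonoidHom := by
  rw [aSub, aSub, Subgroup.map_map, zpow_add_one, zpow_one]
  rfl

theorem relIndex_aSub_add_one (n : ℤ) :
    (aSub α V (n + 1)).relIndex (aSub α V n) = (aSub α V 1).relIndex V := by
  rw [aSub_add_one, aSub]
  exact Subgroup.relIndex_map_map_of_injective _ _ (α ^ n).injective

theorem aSub_antitone (hmap : aSub α V 1 ≤ V) : Antitone (aSub α V) := by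
  refine antitone_int_of_succ_le fun n => ?_
  rw [aSub_add_one]
  exact Subgroup.map_mono hmap

theorem CVert.mk_eq_mk_iff {n m : ℤ} {g g' : H} :
    (⟨n, QuotientGroup.mk g⟩ : CVert α V) = ⟨m, QuotientGroup.mk g'⟩ ↔
      n = m ∧ g⁻¹ * g' ∈ aSub α V m := by
  constructor
  · intro h
    obtain ⟨rfl, h⟩ := Sigma.mk.inj_iff.mp h
    exact ⟨rfl, QuotientGroup.eq.mp (eq_of_heq h)⟩
  · rintro ⟨rfl, h⟩
    exact congrArg (Sigma.mk n) (QuotientGroup.eq.mpr h)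

def shiftEquiv : CVert α V ≃ CVert α V :=
  Equiv.sigmaCongr (Equiv.addRight 1) fun _ => Quotient.congr α.toEquiv fun a b => by
    rw [QuotientGroup.leftRel_apply, QuotientGroup.leftRel_apply, MulEquiv.toEquiv_eq_coe,
      MulEquiv.coe_toEquiv, ← map_inv, ← map_mul]
    exact apply_mem_aSub_add_one_iff.symm

theorem shiftEquiv_mk (n : ℤ) (g : H) :
    shiftEquiv ⟨n, QuotientGroup.mk g⟩ = (⟨n + 1, QuotientGroup.mk (α g)⟩ : CVert α V) := rfl

section Parent

variable (hmap : aSub α V 1 ≤ V)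
include hmap

def parent (u : CVert α V) : CVert α V :=
  ⟨u.1 - 1, Subgroup.quotientMapOfLE (aSub_antitone hmap (Int.sub_le_self _ zero_le_one)) u.2⟩

theorem parent_mk (n : ℤ) (g : H) :
    parent hmap ⟨n, QuotientGroup.mk g⟩ = ⟨n - 1, QuotientGroup.mk g⟩ := rfl

theorem cosetSet_subset_iff (n : ℤ) (g g' : H) :
    cosetSet α V ⟨n + 1, QuotientGroup.mk g⟩ ⊆ cosetSet α V ⟨n, QuotientGroup.mk g'⟩ ↔
      g⁻¹ * g' ∈ aSub α V n := by
  refine ⟨fun hsub => QuotientGroup.eq.mp (hsub rfl), fun hg h hh => QuotientGroup.eq.mpr ?_⟩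
  have hhg : h⁻¹ * g ∈ aSub α V n :=
    aSub_antitone hmap (Int.le_add_one le_rfl) (QuotientGroup.eq.mp hh)
  simpa [mul_assoc] using mul_mem hhg hg

theorem child_iff_parent_eq (u v : CVert α V) :
    (u.1 = v.1 + 1 ∧ cosetSet α V u ⊆ cosetSet α V v) ↔ parent hmap u = v := by
  obtain ⟨n, x⟩ := u
  obtain ⟨m, y⟩ := v
  induction x using QuotientGroup.induction_on with | H g => ?_
  induction y using QuotientGroup.induction_on with | H g' => ?_
  rw [parent_mk, CVert.mk_eq_mk_iff]
  constructor
  · rintro ⟨rfl, hsub⟩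
    exact ⟨add_sub_cancel_right m 1, (cosetSet_subset_iff hmap m g g').mp hsub⟩
  · rintro ⟨hnm, hg⟩
    obtain rfl : n = m + 1 := by omega
    exact ⟨rfl, (cosetSet_subset_iff hmap m g g').mpr hg⟩

theorem cosetGraph_adj_iff (u v : CVert α V) :
    (cosetGraph α V).Adj u v ↔ parent hmap u = v ∨ parent hmap v = u :=
  or_congr (child_iff_parent_eq hmap u v) (child_iff_parent_eq hmap v u)

theorem parent_iterate_mk (k : ℕ) (n : ℤ) (g : H) :
    (parent hmap)^[k] ⟨n, QuotientGroup.mk g⟩ = ⟨n - k, QuotientGroup.mk g⟩ := by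
  induction k with
  | zero => exact CVert.mk_eq_mk_iff.mpr ⟨by simp, by simp⟩
  | succ k ih =>
    rw [Function.iterate_succ_apply', ih, parent_mk, CVert.mk_eq_mk_iff]
    exact ⟨by push_cast; ring, by simp⟩

theorem exists_parent_iterate_eq (hunion : ∀ h : H, ∃ n : ℕ, (α ^ (n : ℤ)) h ∈ V)
    (u v : CVert α V) : ∃ i j : ℕ, (parent hmap)^[i] u = (parent hmap)^[j] v := by
  obtain ⟨n, x⟩ := u
  obtain ⟨m, y⟩ := v
  induction x using QuotientGroup.induction_on with | H g => ?_
  induction y using QuotientGroup.induction_on with | H g' => ?_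
  obtain ⟨k, hk⟩ := hunion (g⁻¹ * g')
  set l := min (-(k : ℤ)) (min n m)
  have hl : g⁻¹ * g' ∈ aSub α V l :=
    aSub_antitone hmap (min_le_left _ _) (mem_aSub_iff.mpr (by rwa [neg_neg]))
  refine ⟨(n - l).toNat, (m - l).toNat, ?_⟩
  rw [parent_iterate_mk, parent_iterate_mk, CVert.mk_eq_mk_iff]
  exact ⟨by omega, aSub_antitone hmap (by omega) hl⟩

theorem preimage_parent_mk (n : ℤ) (x : H ⧸ aSub α V n) :
    parent hmap ⁻¹' {⟨n, x⟩} = Sigma.mk (n + 1) ''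
      (Subgroup.quotientMapOfLE (aSub_antitone hmap (Int.le_add_one le_rfl)) ⁻¹' {x}) := by
  induction x using QuotientGroup.induction_on with | H g' => ?_
  ext u
  constructor
  · obtain ⟨m, y⟩ := u
    induction y using QuotientGroup.induction_on with | H g => ?_
    intro hu
    rw [Set.mem_preimage, parent_mk, Set.mem_singleton_iff] at hu
    obtain ⟨hmn, hg⟩ := CVert.mk_eq_mk_iff.mp hu
    obtain rfl : m = n + 1 := by omega
    exact ⟨QuotientGroup.mk g, QuotientGroup.eq.mpr hg, rfl⟩
  · rintro ⟨y, hy, rfl⟩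
    induction y using QuotientGroup.induction_on with | H g => ?_
    exact CVert.mk_eq_mk_iff.mpr ⟨add_sub_cancel_right n 1, QuotientGroup.eq.mp hy⟩

theorem ncard_preimage_parent (u : CVert α V) :
    (parent hmap ⁻¹' {u}).ncard = (aSub α V 1).relIndex V := by
  obtain ⟨n, x⟩ := u
  rw [preimage_parent_mk, Set.ncard_image_of_injective _ sigma_mk_injective,
    ← Nat.card_coe_set_eq, Subgroup.nat_card_preimage_quotientMapOfLE,
    relIndex_aSub_add_one]

theorem cosetGraph_isTree (hunion : ∀ h : H, ∃ n : ℕ, (α ^ (n : ℤ)) h ∈ V) :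
    (cosetGraph α V).IsTree :=
  haveI : Nonempty (CVert α V) := ⟨⟨0, QuotientGroup.mk 1⟩⟩
  ⟨SimpleGraph.connected_of_exists_iterate_eq
      (fun u => (cosetGraph_adj_iff hmap u _).mpr (Or.inl rfl))
      (exists_parent_iterate_eq hmap hunion),
    SimpleGraph.isAcyclic_of_adj_iff_parent Sigma.fst (fun u => sub_one_lt u.1)
      (cosetGraph_adj_iff hmap)⟩

theorem ncard_neighborSet_cosetGraph {q : ℕ} (hidx : (aSub α V 1).relIndex V = q)
    (hq : q ≠ 0) (u : CVert α V) : ((cosetGraph α V).neighborSet u).ncard = q + 1 :=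
  SimpleGraph.ncard_neighborSet_of_adj_iff_parent Sigma.fst (fun u => sub_one_lt u.1)
    (cosetGraph_adj_iff hmap) (hidx ▸ ncard_preimage_parent hmap u) hq

theorem parent_smul (h : H) (u : CVert α V) : parent hmap (h • u) = h • parent hmap u := by
  obtain ⟨n, x⟩ := u
  induction x using QuotientGroup.induction_on with | H g => rfl

theorem parent_shiftEquiv (u : CVert α V) :
    parent hmap (shiftEquiv u) = shiftEquiv (parent hmap u) := by
  obtain ⟨n, x⟩ := u
  induction x using QuotientGroup.induction_on with | H g => ?_
  rw [shiftEquiv_mk, parent_mk, parent_mk, shiftEquiv_mk, CVert.mk_eq_mk_iff]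
  exact ⟨by ring, by simp⟩

def translate (h : H) : cosetGraph α V ≃g cosetGraph α V :=
  SimpleGraph.isoOfCommuteParent (cosetGraph_adj_iff hmap) (MulAction.toPerm h)
    (parent_smul hmap h)

def shift : cosetGraph α V ≃g cosetGraph α V :=
  SimpleGraph.isoOfCommuteParent (cosetGraph_adj_iff hmap) shiftEquiv (parent_shiftEquiv hmap)

theorem translate_mk (h g : H) (n : ℤ) :
    translate hmap h ⟨n, QuotientGroup.mk g⟩ = ⟨n, QuotientGroup.mk (h * g)⟩ := rfl

theorem shift_mk (g : H) (n : ℤ) :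
    shift hmap ⟨n, QuotientGroup.mk g⟩ = ⟨n + 1, QuotientGroup.mk (α g)⟩ := rfl

theorem shift_zpow_mk_one (k n : ℤ) :
    (shift hmap ^ k) ⟨n, QuotientGroup.mk 1⟩ = ⟨n + k, QuotientGroup.mk 1⟩ := by
  have shift_base (n : ℤ) :
      shift hmap ⟨n, QuotientGroup.mk 1⟩ = ⟨n + 1, QuotientGroup.mk 1⟩ := by
    rw [shift_mk, map_one]
  induction k using Int.induction_on generalizing n with
  | zero => exact CVert.mk_eq_mk_iff.mpr ⟨by simp, by simp⟩
  | succ k ih =>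
    rw [zpow_add_one, RelIso.mul_apply, shift_base, ih, add_right_comm, add_assoc]
  | pred k ih =>
    rw [← sub_add_cancel n 1, ← shift_base, ← RelIso.mul_apply, ← zpow_add_one,
      sub_add_cancel, ih, sub_add_cancel]
    exact CVert.mk_eq_mk_iff.mpr ⟨by ring, by simp⟩

theorem exists_mem_closure_shift_translate_apply_eq (u v : CVert α V) :
    ∃ φ ∈ Subgroup.closure (insert (shift hmap) (Set.range (translate hmap))), φ u = v := by
  obtain ⟨n, x⟩ := u
  obtain ⟨m, y⟩ := v
  induction x using QuotientGroup.induction_on with | H g => ?_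
  induction y using QuotientGroup.induction_on with | H g' => ?_
  have translate_mem (h : H) : translate hmap h ∈
      Subgroup.closure (insert (shift hmap) (Set.range (translate hmap))) :=
    Subgroup.subset_closure (Set.mem_insert_of_mem _ ⟨h, rfl⟩)
  have shift_mem :=
    Subgroup.subset_closure (Set.mem_insert (shift hmap) (Set.range (translate hmap)))
  refine ⟨translate hmap g' * shift hmap ^ (m - n) * (translate hmap g)⁻¹,
    mul_mem (mul_mem (translate_mem g') (zpow_mem shift_mem _)) (inv_mem (translate_mem g)), ?_⟩
  have mk_eq_translate (g : H) (n : ℤ) : (⟨n, QuotientGroup.mk g⟩ : CVert α V) =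
      translate hmap g ⟨n, QuotientGroup.mk 1⟩ := by
    rw [translate_mk, mul_one]
  rw [mk_eq_translate g, mk_eq_translate g', RelIso.mul_apply, RelIso.mul_apply,
    RelIso.inv_apply_self, shift_zpow_mk_one, add_sub_cancel]

end Parent

end Scale

open Scale in
/-- If `α(V) ≤ V` with finite index `q ≥ 2` and `H = ⋃ α⁻ⁿ(V)`, then the
coset graph `T^(α)` is a `(q+1)`-regular tree, left translations and the shift `ᾱ` are
graph automorphisms, and together they generate a vertex-transitive group of
automorphisms. -/
theorem statement_14 (q : ℕ) (hq : 2 ≤ q) {H : Type*} [Group H] (α : MulAut H)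
    (V : Subgroup H)
    (hmap : aSub α V 1 ≤ V)
    (hidx : (aSub α V 1).relIndex V = q)
    (hunion : ∀ h : H, ∃ n : ℕ, (α ^ (n : ℤ)) h ∈ V) :
    (cosetGraph α V).IsTree ∧
    (∀ u : CVert α V, ((cosetGraph α V).neighborSet u).ncard = q + 1) ∧
    ∃ (L : H → (cosetGraph α V ≃g cosetGraph α V))
      (A : cosetGraph α V ≃g cosetGraph α V),
      (∀ (h g : H) (n : ℤ),
        L h ⟨n, QuotientGroup.mk g⟩ = (⟨n, QuotientGroup.mk (h * g)⟩ : CVert α V)) ∧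
      (∀ (g : H) (n : ℤ),
        A ⟨n, QuotientGroup.mk g⟩ = (⟨n + 1, QuotientGroup.mk (α g)⟩ : CVert α V)) ∧
      (∀ u u' : CVert α V,
        ∃ φ ∈ Subgroup.closure (insert A (Set.range L)), φ u = u') :=
  ⟨cosetGraph_isTree hmap hunion, ncard_neighborSet_cosetGraph hmap hidx (by omega),
    translate hmap, shift hmap, translate_mk hmap, shift_mk hmap,
    exists_mem_closure_shift_translate_apply_eq hmap⟩
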